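/- For every positive integer w there exists a real polynomial p of degree O(w^{1/3}) such that |p(1/k)| ≤ 1 for all integers k ∈ {1, …, 2w}, p(1/w) ≤ 1/3, and p(1/(2w)) ≥ 2/3. -/

import Mathlib

/-!
Take `p = u · q`, where `u x = ∏_{k ≤ m} (1 - k x)` kills the points `1/k` with `k ≤ m`,
and `q` is the Chebyshev polynomial `T_n` composed with the decreasing affine map sending
`1/(2w) ↦ 1` and `1/w ↦ cos (π/n)`, so that `q (1/(2w)) = 1` and `q (1/w) = -1`. On the
remaining points `1/k ∈ [1/(2w), 1/(m+1)]` the affine map stays in `[-1, 1]` as soon as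
`5 w ≤ (m + 1) n²` (because `1 - cos (π/n) ≤ π²/(2n²)`), and there `0 ≤ u ≤ 1`; moreover
`u (1/(2w)) ≥ 1 - m²/(2w) ≥ 2/3` as soon as `3 m² ≤ 2 w`. Both conditions hold for
`m + 1 = ⌊w^{1/3}⌋` and `n = 7 (m + 1)`, giving degree at most `8 w^{1/3}`.
-/

open Polynomial Real

namespace Polynomial.Chebyshev

lemma eval_T_real_node_one {n : ℕ} (hn : n ≠ 0) : (T ℝ n).eval (node n 1) = -1 := by
  simpa using eval_T_real_node (i := 1) (by simpa using Nat.one_le_iff_ne_zero.mpr hn)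

lemma one_sub_node_one_nonneg (n : ℕ) : 0 ≤ 1 - node n 1 :=
  sub_nonneg.mpr node_mem_Icc.2

lemma one_sub_node_one_mul_sq_le (n : ℕ) : (1 - node n 1) * n ^ 2 ≤ 5 := by
  rcases eq_or_ne n 0 with rfl | hn
  · simp
  have hcos : 1 - (π / n) ^ 2 / 2 ≤ node n 1 := by
    simpa [node] using one_sub_sq_div_two_le_cos (x := π / n)
  have hπ : π ^ 2 < 10 := by nlinarith [pi_lt_d2, pi_pos]
  have hn' : (0 : ℝ) < n ^ 2 := by positivity
  calc (1 - node n 1) * n ^ 2 ≤ (π / n) ^ 2 / 2 * n ^ 2 := by gcongr; linarith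
    _ = π ^ 2 / 2 := by field_simp
    _ ≤ 5 := by linarith

end Polynomial.Chebyshev

open Polynomial.Chebyshev

noncomputable def stretchedT (w n : ℕ) : ℝ[X] :=
  (T ℝ n).comp (1 - C (1 - node n 1) * (C (2 * w : ℝ) * X - 1))

lemma eval_stretchedT (w n : ℕ) (x : ℝ) :
    (stretchedT w n).eval x = (T ℝ n).eval (1 - (1 - node n 1) * (2 * w * x - 1)) := by
  simp [stretchedT]

lemma natDegree_stretchedT_le (w n : ℕ) : (stretchedT w n).natDegree ≤ n := by
  refine (natDegree_comp_le).trans ?_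
  rw [natDegree_T]
  have : (1 - C (1 - node n 1) * (C (2 * w : ℝ) * X - 1)).natDegree ≤ 1 := by compute_degree
  simpa using Nat.mul_le_mul_left n this

lemma stretchedT_eval_inv_two_mul {w : ℕ} (hw : w ≠ 0) (n : ℕ) :
    (stretchedT w n).eval (1 / (2 * w : ℝ)) = 1 := by
  rw [eval_stretchedT, mul_one_div_cancel (by positivity)]
  simp [T_eval_one]

lemma stretchedT_eval_inv {w n : ℕ} (hw : w ≠ 0) (hn : n ≠ 0) :
    (stretchedT w n).eval (1 / (w : ℝ)) = -1 := by
  rw [eval_stretchedT, ← eval_T_real_node_one hn]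
  congr 1
  field_simp
  ring

lemma abs_eval_stretchedT_le_one {w n : ℕ} {x : ℝ} (hx₀ : 1 ≤ 2 * w * x)
    (hx₁ : 5 * w * x ≤ n ^ 2) : |(stretchedT w n).eval x| ≤ 1 := by
  rw [eval_stretchedT]
  refine abs_eval_T_real_le_one _ (abs_le.mpr ⟨?_, ?_⟩)
  · nlinarith [one_sub_node_one_mul_sq_le n, one_sub_node_one_nonneg n]
  · nlinarith [one_sub_node_one_nonneg n]

noncomputable def invRootsPoly (m : ℕ) : ℝ[X] := ∏ k ∈ Finset.Icc 1 m, (1 - C (k : ℝ) * X)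

lemma eval_invRootsPoly (m : ℕ) (x : ℝ) :
    (invRootsPoly m).eval x = ∏ k ∈ Finset.Icc 1 m, (1 - k * x) := by
  simp [invRootsPoly, eval_prod]

lemma natDegree_invRootsPoly_le (m : ℕ) : (invRootsPoly m).natDegree ≤ m := by
  refine (natDegree_prod_le _ _).trans ?_
  refine (Finset.sum_le_card_nsmul _ _ 1 fun k _ => ?_).trans (by simp)
  compute_degree

lemma invRootsPoly_eval_inv {m k : ℕ} (hk : 1 ≤ k) (hkm : k ≤ m) :
    (invRootsPoly m).eval (k : ℝ)⁻¹ = 0 := by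
  rw [eval_invRootsPoly]
  refine Finset.prod_eq_zero (Finset.mem_Icc.mpr ⟨hk, hkm⟩) ?_
  field_simp
  simp

lemma eval_invRootsPoly_mem_Icc {m : ℕ} {x : ℝ} (hx : 0 ≤ x) (hmx : m * x ≤ 1) :
    (invRootsPoly m).eval x ∈ Set.Icc 0 1 := by
  have hk : ∀ k ∈ Finset.Icc 1 m, 0 ≤ 1 - (k : ℝ) * x ∧ 1 - (k : ℝ) * x ≤ 1 := by
    intro k hk
    have : (k : ℝ) ≤ m := by exact_mod_cast (Finset.mem_Icc.mp hk).2
    constructor <;> nlinarith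
  rw [eval_invRootsPoly]
  exact ⟨Finset.prod_nonneg fun k hk' => (hk k hk').1,
    Finset.prod_le_one (fun k hk' => (hk k hk').1) fun k hk' => (hk k hk').2⟩

lemma one_sub_sq_mul_le_eval_invRootsPoly {m : ℕ} {x : ℝ} (hx : 0 ≤ x) (hmx : m * x ≤ 1) :
    1 - m ^ 2 * x ≤ (invRootsPoly m).eval x := by
  have hprod : (1 - m * x) ^ m ≤ (invRootsPoly m).eval x := by
    rw [eval_invRootsPoly]
    simpa using Finset.prod_le_prod (s := Finset.Icc 1 m) (f := fun _ => 1 - m * x)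
      (fun _ _ => sub_nonneg.mpr hmx) fun k hk => by
        have : (k : ℝ) ≤ m := by exact_mod_cast (Finset.mem_Icc.mp hk).2
        nlinarith
  calc 1 - m ^ 2 * x = 1 + m * -(m * x) := by ring
    _ ≤ (1 + -(m * x)) ^ m := one_add_mul_le_pow (by linarith) m
    _ = (1 - m * x) ^ m := by rw [← sub_eq_add_neg]
    _ ≤ _ := hprod

theorem exists_separating_poly (w m n : ℕ) (hw : w ≠ 0) (hn : n ≠ 0)
    (hwn : 5 * w ≤ (m + 1) * n ^ 2) (hmw : 3 * m ^ 2 ≤ 2 * w) :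
    ∃ p : ℝ[X], p.natDegree ≤ m + n ∧
      (∀ k : ℕ, 1 ≤ k → k ≤ 2 * w → |p.eval (1 / (k : ℝ))| ≤ 1) ∧
      p.eval (1 / (w : ℝ)) ≤ 1 / 3 ∧ 2 / 3 ≤ p.eval (1 / (2 * w : ℝ)) := by
  have hwR : (0 : ℝ) < w := by positivity
  have hwn' : 5 * (w : ℝ) ≤ (m + 1) * n ^ 2 := by exact_mod_cast hwn
  have hmw' : 3 * (m : ℝ) ^ 2 ≤ 2 * w := by exact_mod_cast hmw
  have hmw₁ : (m : ℝ) ≤ w := by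
    have : m ≤ w := by nlinarith
    exact_mod_cast this
  refine ⟨invRootsPoly m * stretchedT w n, (natDegree_mul_le).trans
    (add_le_add (natDegree_invRootsPoly_le m) (natDegree_stretchedT_le w n)), ?_, ?_, ?_⟩
  · intro k hk hkw
    rcases le_or_gt k m with hkm | hmk
    · simp [one_div, invRootsPoly_eval_inv hk hkm]
    have hkR : (m : ℝ) + 1 ≤ k := by exact_mod_cast hmk
    have hkw' : (k : ℝ) ≤ 2 * w := by exact_mod_cast hkw
    have hk0 : (0 : ℝ) < k := by linarith
    have hu := eval_invRootsPoly_mem_Icc (m := m) (x := 1 / k) (by positivity)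
      (by rw [mul_one_div, div_le_one hk0]; linarith)
    have hq := abs_eval_stretchedT_le_one (w := w) (n := n) (x := 1 / k)
      (by rw [mul_one_div, one_le_div hk0]; linarith)
      (by
        rw [mul_one_div, div_le_iff₀ hk0]
        nlinarith)
    rw [eval_mul, abs_mul, abs_of_nonneg hu.1]
    exact mul_le_one₀ hu.2 (abs_nonneg _) hq
  · have hu := eval_invRootsPoly_mem_Icc (m := m) (x := 1 / w) (by positivity)
      (by rw [mul_one_div, div_le_one hwR]; exact hmw₁)
    rw [eval_mul, stretchedT_eval_inv hw hn]
    linarith [hu.1]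
  · have hu := one_sub_sq_mul_le_eval_invRootsPoly (m := m) (x := 1 / (2 * w)) (by positivity)
      (by rw [mul_one_div, div_le_one (by positivity)]; linarith)
    rw [eval_mul, stretchedT_eval_inv_two_mul hw, mul_one]
    refine le_trans ?_ hu
    rw [mul_one_div, le_sub_comm, div_le_iff₀ (by positivity)]
    linarith

theorem exists_cube_le_lt_succ_cube (w : ℕ) :
    ∃ r : ℕ, (r : ℝ) ≤ (w : ℝ) ^ ((1 : ℝ) / 3) ∧ r ^ 3 ≤ w ∧ w < (r + 1) ^ 3 := by
  set c := (w : ℝ) ^ ((1 : ℝ) / 3)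
  have hc : 0 ≤ c := by positivity
  have hc3 : c ^ 3 = w := by
    simpa [c, one_div] using
      rpow_inv_natCast_pow (n := 3) (Nat.cast_nonneg (α := ℝ) w) (by norm_num)
  refine ⟨⌊c⌋₊, Nat.floor_le hc, ?_, ?_⟩
  · have := pow_le_pow_left₀ (Nat.cast_nonneg _) (Nat.floor_le hc) 3
    exact_mod_cast hc3 ▸ this
  · have := pow_lt_pow_left₀ (Nat.lt_floor_add_one c) hc (by norm_num : 3 ≠ 0)
    exact_mod_cast hc3 ▸ this

/-- Tightness of fedja's lemma. -/
theorem fedja_tight : ∃ C : ℝ, 0 < C ∧ ∀ w : ℕ, 0 < w → ∃ p : Polynomial ℝ,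
    (p.natDegree : ℝ) ≤ C * (w : ℝ) ^ ((1 : ℝ) / 3) ∧
    (∀ k : ℕ, 1 ≤ k → k ≤ 2 * w → |p.eval (1 / (k : ℝ))| ≤ 1) ∧
    p.eval (1 / (w : ℝ)) ≤ 1 / 3 ∧
    2 / 3 ≤ p.eval (1 / (2 * w : ℝ)) := by
  refine ⟨8, by norm_num, fun w hw => ?_⟩
  obtain ⟨r, hr, hr3, hwr⟩ := exists_cube_le_lt_succ_cube w
  obtain ⟨m, rfl⟩ : ∃ m, r = m + 1 := Nat.exists_eq_add_one.mpr
    (Nat.pos_of_ne_zero (by rintro rfl; simp at hwr; omega))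
  have hcheb : 5 * w ≤ (m + 1) * (7 * (m + 1)) ^ 2 := by nlinarith
  have hroots : 3 * m ^ 2 ≤ 2 * w := by
    have : 3 * m ^ 2 ≤ (m + 1) ^ 3 := by ring_nf; linarith [Nat.zero_le (m ^ 3), Nat.zero_le m]
    omega
  obtain ⟨p, hdeg, hp⟩ :=
    exists_separating_poly w m (7 * (m + 1)) hw.ne' (by positivity) hcheb hroots
  refine ⟨p, ?_, hp⟩
  calc (p.natDegree : ℝ) ≤ 8 * (m + 1 : ℕ) := by
        exact_mod_cast (by omega : p.natDegree ≤ 8 * (m + 1))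
    _ ≤ 8 * (w : ℝ) ^ ((1 : ℝ) / 3) := by gcongr
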